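/- Let g ≥ h ≥ 2 be integers and let A ⊆ ℕ be a C_h[g]-set in ℤ. There is a constant C = C(g,h) > 0 such that for every integer N ≥ 2, writing A_ν = |A ∩ ((ν-1)N, νN]| for 1 ≤ ν ≤ N, one has Σ_{ν=1}^{N} A_ν · ν^{-(1 - 1/h)} ≤ C · (N log N)^{1 - 1/h}. -/

import Mathlib

/-!
Cut `A ∩ (0, N²]` into the blocks `A_ν` of length `N`. An `h`-subset `X` of a block is the
translate by `min X` of its shape `X - min X`, an `h`-subset of `[0, N)` containing `0`. There are
at most `N^(h-1)` shapes, and by the `C_h[g]` property each shape is the shape of fewer than `g`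
subsets of `A`, so `∑ binom(A_ν, h) < g N^(h-1)` and hence `∑ A_ν^h ≪ N^(h-1)`. Hölder's
inequality with exponents `h` and `h/(h-1)`, together with `∑ 1/ν ≪ log N`, gives
`∑ A_ν ν^(-(1-1/h)) ≪ (N^(h-1))^(1/h) (log N)^(1-1/h)`.
-/

/-- `A ⊆ Γ` is a `C_h[g]`-set. -/
def IsChSet {Γ : Type*} [AddCommGroup Γ] (h g : ℕ) (A : Set Γ) : Prop :=
  ∀ X : Finset Γ, X.card = h → ∀ K : Finset Γ, K.card = g →
    ∃ k ∈ K, ¬ (∀ x ∈ X, x + k ∈ A)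

open Finset Real

theorem IsChSet.card_lt {Γ : Type*} [AddCommGroup Γ] {h g : ℕ} {A : Set Γ}
    (hA : IsChSet h g A) {X K : Finset Γ} (hX : X.card = h)
    (hK : ∀ k ∈ K, ∀ x ∈ X, x + k ∈ A) : K.card < g := by
  by_contra! hg
  obtain ⟨K', hK'K, hK'⟩ := exists_subset_card_eq hg
  obtain ⟨k, hk, hnot⟩ := hA X hX K' hK'
  exact hnot (hK k (hK'K hk))

theorem Nat.pow_le_pow_mul_descFactorial_add_one (a h : ℕ) :
    a ^ h ≤ h ^ h * (a.descFactorial h + 1) := by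
  rcases lt_or_ge a h with hah | hha
  · calc a ^ h ≤ h ^ h := Nat.pow_le_pow_left hah.le h
      _ ≤ _ := Nat.le_mul_of_pos_right _ (Nat.succ_pos _)
  obtain ⟨t, rfl⟩ := Nat.exists_eq_add_of_le hha
  rcases Nat.eq_zero_or_pos h with rfl | hpos
  · simp
  calc (h + t) ^ h ≤ (h * (t + 1)) ^ h := Nat.pow_le_pow_left (by nlinarith) h
    _ = h ^ h * (h + t + 1 - h) ^ h := by rw [mul_pow]; congr 2; omega
    _ ≤ h ^ h * ((h + t).descFactorial h + 1) := by
        gcongr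
        exact (Nat.pow_sub_le_descFactorial _ _).trans (Nat.le_succ _)

theorem sum_Icc_inv_le_mul_log {N : ℕ} (hN : 2 ≤ N) :
    ∑ ν ∈ Icc 1 N, (ν : ℝ)⁻¹ ≤ (1 / log 2 + 1) * log N := by
  have hlog2 : 0 < log 2 := log_pos one_lt_two
  have hlogN : 1 ≤ log N / log 2 :=
    (one_le_div hlog2).2 (log_le_log two_pos (by exact_mod_cast hN))
  calc ∑ ν ∈ Icc 1 N, (ν : ℝ)⁻¹ = harmonic N := by simp [harmonic_eq_sum_Icc]
    _ ≤ 1 + log N := harmonic_le_one_add_log N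
    _ ≤ (1 / log 2 + 1) * log N := by rw [add_mul, one_div_mul_eq_div]; linarith

theorem sum_mul_rpow_neg_le {p : ℝ} (hp : 1 < p) (s : Finset ℕ) {a : ℕ → ℝ}
    (ha : ∀ ν ∈ s, 0 ≤ a ν) :
    ∑ ν ∈ s, a ν * (ν : ℝ) ^ (-(1 - 1 / p)) ≤
      (∑ ν ∈ s, a ν ^ p) ^ (1 / p) * (∑ ν ∈ s, (ν : ℝ)⁻¹) ^ (1 - 1 / p) := by
  have hpq := Real.HolderConjugate.conjExponent hp
  have hq : 1 / p.conjExponent = 1 - 1 / p := by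
    rw [one_div, one_div, hpq.one_sub_inv]
  have hpow : ∀ ν : ℕ, ((ν : ℝ) ^ (-(1 - 1 / p))) ^ p.conjExponent = (ν : ℝ)⁻¹ := by
    intro ν
    rw [← rpow_mul (Nat.cast_nonneg ν), ← hq, neg_mul, one_div_mul_cancel hpq.symm.ne_zero,
      rpow_neg_one]
  simpa only [hpow, hq] using
    inner_le_Lp_mul_Lq_of_nonneg s hpq ha (g := fun ν : ℕ => (ν : ℝ) ^ (-(1 - 1 / p)))
      fun ν _ => rpow_nonneg (Nat.cast_nonneg ν) _

namespace ChSet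

/-- The translate `X - min X` (on `ℕ`, `sInf` of a nonempty set is its minimum). -/
noncomputable def shape (X : Finset ℕ) : Finset ℕ := X.image (· - sInf (X : Set ℕ))

theorem image_shape_add (X : Finset ℕ) : (shape X).image (· + sInf (X : Set ℕ)) = X := by
  rw [shape, image_image]
  conv_rhs => rw [← image_id (s := X)]
  exact image_congr fun x hx => Nat.sub_add_cancel (Nat.sInf_le hx)

theorem add_sInf_mem_of_mem_shape {X : Finset ℕ} {d : ℕ} (hd : d ∈ shape X) :
    d + sInf (X : Set ℕ) ∈ X := by
  have := mem_image_of_mem (· + sInf (X : Set ℕ)) hd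
  rwa [image_shape_add] at this

theorem zero_mem_shape {X : Finset ℕ} (hX : X.Nonempty) : 0 ∈ shape X :=
  mem_image.2 ⟨_, Nat.sInf_mem (coe_nonempty.2 hX), Nat.sub_self _⟩

theorem card_shape (X : Finset ℕ) : (shape X).card = X.card :=
  card_image_of_injOn fun x hx y hy hxy => by
    have := Nat.sInf_le (s := (X : Set ℕ)) hx
    have := Nat.sInf_le (s := (X : Set ℕ)) hy
    omega

theorem shape_subset_range {X : Finset ℕ} {N : ℕ} (hX : ∀ x ∈ X, x < sInf (X : Set ℕ) + N) :
    shape X ⊆ range N := by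
  intro d hd
  obtain ⟨x, hx, rfl⟩ := mem_image.1 hd
  have := hX x hx
  have := Nat.sInf_le (s := (X : Set ℕ)) hx
  rw [mem_range]
  omega

variable {h g : ℕ} {A : Set ℕ}

/-- The finsets of shape `D` are the translates of `D` by their minima, which are distinct. -/
theorem card_filter_shape_lt (hA : IsChSet h g ((fun a : ℕ => (a : ℤ)) '' A))
    (𝒳 : Finset (Finset ℕ)) (h𝒳 : ∀ X ∈ 𝒳, (X : Set ℕ) ⊆ A) {D : Finset ℕ} (hD : D.card = h) :
    (𝒳.filter (shape · = D)).card < g := by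
  set F := 𝒳.filter (shape · = D)
  have hmin : Set.InjOn (fun X : Finset ℕ => ((sInf (X : Set ℕ) : ℕ) : ℤ)) F := by
    intro X hX Y hY hXY
    rw [← image_shape_add X, ← image_shape_add Y, (mem_filter.1 hX).2, (mem_filter.1 hY).2,
      Nat.cast_inj.1 hXY]
  rw [← card_image_of_injOn hmin]
  refine hA.card_lt (X := D.image ((↑) : ℕ → ℤ))
    ((card_image_of_injective _ Nat.cast_injective).trans hD) ?_
  simp only [mem_image, forall_exists_index, and_imp]
  rintro _ Y hY rfl _ d hd rfl
  obtain ⟨hY𝒳, hYD⟩ := mem_filter.1 hY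
  exact ⟨_, h𝒳 Y hY𝒳 (add_sInf_mem_of_mem_shape (hYD ▸ hd)), by push_cast; rfl⟩

theorem card_image_shape_le (hh : 1 ≤ h) {N : ℕ} (𝒳 : Finset (Finset ℕ))
    (h𝒳 : ∀ X ∈ 𝒳, X.card = h ∧ ∀ x ∈ X, x < sInf (X : Set ℕ) + N) :
    (𝒳.image shape).card ≤ N.choose (h - 1) := by
  have hzero : ∀ D ∈ 𝒳.image shape, 0 ∈ D := by
    simp only [mem_image, forall_exists_index, and_imp]
    rintro _ X hX rfl
    exact zero_mem_shape (card_pos.1 ((h𝒳 X hX).1 ▸ hh))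
  calc (𝒳.image shape).card ≤ ((range N).powersetCard (h - 1)).card := by
        refine card_le_card_of_injOn (·.erase 0) ?_ fun D hD E hE hDE => ?_
        · simp only [Set.MapsTo, coe_image, Set.mem_image, mem_coe, forall_exists_index, and_imp]
          rintro _ X hX rfl
          rw [mem_powersetCard, card_erase_of_mem (hzero _ (mem_image_of_mem _ hX)),
            card_shape, (h𝒳 X hX).1]
          exact ⟨(erase_subset _ _).trans (shape_subset_range (h𝒳 X hX).2), rfl⟩
        · rw [← insert_erase (hzero D hD), ← insert_erase (hzero E hE)]
          exact congrArg _ hDE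
    _ = N.choose (h - 1) := by rw [card_powersetCard, card_range]

theorem card_le_of_isChSet (hh : 1 ≤ h) (hA : IsChSet h g ((fun a : ℕ => (a : ℤ)) '' A))
    {N : ℕ} (𝒳 : Finset (Finset ℕ))
    (h𝒳 : ∀ X ∈ 𝒳, X.card = h ∧ (X : Set ℕ) ⊆ A ∧ ∀ x ∈ X, x < sInf (X : Set ℕ) + N) :
    𝒳.card ≤ (g - 1) * N.choose (h - 1) := by
  calc 𝒳.card ≤ (g - 1) * (𝒳.image shape).card := by
        refine card_le_mul_card_image _ _ fun D hD => Nat.le_sub_one_of_lt ?_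
        obtain ⟨X, hX, rfl⟩ := mem_image.1 hD
        exact card_filter_shape_lt hA 𝒳 (fun X hX => (h𝒳 X hX).2.1)
          ((card_shape X).trans (h𝒳 X hX).1)
    _ ≤ (g - 1) * N.choose (h - 1) := by
        gcongr
        exact card_image_shape_le hh 𝒳 fun X hX => ⟨(h𝒳 X hX).1, (h𝒳 X hX).2.2⟩

theorem sum_choose_card_le (hh : 1 ≤ h) (hA : IsChSet h g ((fun a : ℕ => (a : ℤ)) '' A))
    {N : ℕ} (s : Finset ℕ) (B : ℕ → Finset ℕ) (hdisj : (s : Set ℕ).PairwiseDisjoint B)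
    (hBA : ∀ ν ∈ s, (B ν : Set ℕ) ⊆ A) (hwidth : ∀ ν ∈ s, ∀ x ∈ B ν, ∀ y ∈ B ν, y < x + N) :
    ∑ ν ∈ s, (B ν).card.choose h ≤ (g - 1) * N.choose (h - 1) := by
  classical
  have hdisj' : (s : Set ℕ).PairwiseDisjoint fun ν => (B ν).powersetCard h := by
    intro ν hν μ hμ hne
    refine disjoint_left.2 fun X hXν hXμ => ?_
    obtain ⟨x, hx⟩ := card_pos.1 ((mem_powersetCard.1 hXν).2 ▸ hh)
    exact disjoint_left.1 (hdisj hν hμ hne) ((mem_powersetCard.1 hXν).1 hx)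
      ((mem_powersetCard.1 hXμ).1 hx)
  simp_rw [← card_powersetCard, ← card_biUnion hdisj']
  refine card_le_of_isChSet hh hA _ fun X hX => ?_
  obtain ⟨ν, hν, hX⟩ := mem_biUnion.1 hX
  obtain ⟨hXB, hXh⟩ := mem_powersetCard.1 hX
  have hne : (X : Set ℕ).Nonempty := coe_nonempty.2 (card_pos.1 (hXh ▸ hh))
  exact ⟨hXh, (coe_subset.2 hXB).trans (hBA ν hν),
    fun x hx => hwidth ν hν _ (hXB (Nat.sInf_mem hne)) x (hXB hx)⟩

open Nat in
theorem sum_pow_ncard_inter_Ioc_le (hh : 2 ≤ h) (hA : IsChSet h g ((fun a : ℕ => (a : ℤ)) '' A))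
    (N : ℕ) :
    ∑ ν ∈ Icc 1 N, (A ∩ Set.Ioc ((ν - 1) * N) (ν * N)).ncard ^ h ≤
      h ^ h * (h ! * g + 1) * N ^ (h - 1) := by
  classical
  set B : ℕ → Finset ℕ := fun ν => (Ioc ((ν - 1) * N) (ν * N)).filter (· ∈ A)
  have hB : ∀ ν, (A ∩ Set.Ioc ((ν - 1) * N) (ν * N)).ncard = (B ν).card := by
    intro ν
    rw [← Set.ncard_coe_finset]
    congr 1
    ext x
    simp only [B, coe_filter, mem_Ioc, Set.mem_inter_iff, Set.mem_Ioc,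
      Set.mem_ofPred_eq]
    tauto
  have hdisj : ((Icc 1 N : Finset ℕ) : Set ℕ).PairwiseDisjoint B := by
    intro ν hν μ hμ hne
    refine disjoint_left.2 fun x hxν hxμ => ?_
    simp only [B, mem_filter, mem_Ioc] at hxν hxμ
    rcases Nat.lt_or_gt_of_ne hne with hlt | hlt
    · have := Nat.mul_le_mul_right N (show ν ≤ μ - 1 by omega)
      omega
    · have := Nat.mul_le_mul_right N (show μ ≤ ν - 1 by omega)
      omega
  have hwidth : ∀ ν ∈ Icc 1 N, ∀ x ∈ B ν, ∀ y ∈ B ν, y < x + N := by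
    intro ν hν x hx y hy
    simp only [B, mem_filter, mem_Ioc] at hx hy
    have : (ν - 1) * N + N = ν * N := by
      rw [← Nat.succ_mul, Nat.succ_eq_add_one, Nat.sub_add_cancel (mem_Icc.1 hν).1]
    omega
  have hchoose := sum_choose_card_le (by omega) hA (Icc 1 N) B hdisj
    (fun ν _ x hx => (mem_filter.1 hx).2) hwidth
  calc ∑ ν ∈ Icc 1 N, (A ∩ Set.Ioc ((ν - 1) * N) (ν * N)).ncard ^ h
      ≤ ∑ ν ∈ Icc 1 N, h ^ h * ((B ν).card.descFactorial h + 1) := by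
        simp_rw [hB]
        exact sum_le_sum fun ν _ => Nat.pow_le_pow_mul_descFactorial_add_one _ _
    _ = h ^ h * (h ! * ∑ ν ∈ Icc 1 N, (B ν).card.choose h + N) := by
        simp only [descFactorial_eq_factorial_mul_choose]
        rw [← mul_sum, sum_add_distrib, ← mul_sum, sum_const, card_Icc, smul_eq_mul, mul_one,
          Nat.add_sub_cancel]
    _ ≤ h ^ h * (h ! * ((g - 1) * N ^ (h - 1)) + N ^ (h - 1)) := by
        gcongr
        · exact hchoose.trans (Nat.mul_le_mul_left _ (choose_le_pow _ _))
        · exact Nat.le_self_pow (by omega) N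
    _ ≤ h ^ h * (h ! * g + 1) * N ^ (h - 1) := by
        rw [mul_assoc, add_mul, one_mul, mul_assoc]
        gcongr
        exact Nat.sub_le g 1

end ChSet

theorem stmt14_general (g h : ℕ) (hh : 2 ≤ h) :
    ∃ C : ℝ, 0 < C ∧ ∀ A : Set ℕ, IsChSet h g ((fun a : ℕ => (a : ℤ)) '' A) →
      ∀ N : ℕ, 2 ≤ N →
        ∑ ν ∈ Finset.Icc 1 N,
            ((A ∩ Set.Ioc ((ν - 1) * N) (ν * N)).ncard : ℝ) * (ν : ℝ) ^ (-(1 - (1 : ℝ) / h))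
          ≤ C * ((N : ℝ) * Real.log N) ^ (1 - (1 : ℝ) / h) := by
  set C₁ : ℝ := ((h ^ h * (h.factorial * g + 1) : ℕ) : ℝ) with hC₁
  refine ⟨C₁ ^ (1 / (h : ℝ)) * (1 / log 2 + 1) ^ (1 - 1 / (h : ℝ)), by positivity,
    fun A hA N hN => ?_⟩
  have hh' : (1 : ℝ) < h := by exact_mod_cast hh
  have hcount :
      ∑ ν ∈ Icc 1 N, ((A ∩ Set.Ioc ((ν - 1) * N) (ν * N)).ncard : ℝ) ^ (h : ℝ) ≤
        C₁ * (N : ℝ) ^ ((h : ℝ) - 1) := by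
    rw [show (h : ℝ) - 1 = ((h - 1 : ℕ) : ℝ) by rw [Nat.cast_sub (by omega), Nat.cast_one]]
    simp_rw [rpow_natCast, hC₁]
    exact_mod_cast ChSet.sum_pow_ncard_inter_Ioc_le hh hA N
  have hexp : ((h : ℝ) - 1) * (1 / h) = 1 - 1 / h := by field_simp
  have hlogN : 0 ≤ log N := log_nonneg (by exact_mod_cast (by omega : 1 ≤ N))
  calc _ ≤ (∑ ν ∈ Icc 1 N, ((A ∩ Set.Ioc ((ν - 1) * N) (ν * N)).ncard : ℝ) ^ (h : ℝ))
          ^ (1 / (h : ℝ)) * (∑ ν ∈ Icc 1 N, (ν : ℝ)⁻¹) ^ (1 - 1 / (h : ℝ)) :=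
        sum_mul_rpow_neg_le hh' _ fun _ _ => Nat.cast_nonneg _
    _ ≤ (C₁ * (N : ℝ) ^ ((h : ℝ) - 1)) ^ (1 / (h : ℝ))
        * ((1 / log 2 + 1) * log N) ^ (1 - 1 / (h : ℝ)) := by
        gcongr
        · exact sub_nonneg.2 ((div_le_one (by positivity)).2 hh'.le)
        · exact sum_Icc_inv_le_mul_log hN
    _ = _ := by
        rw [mul_rpow (by positivity) (by positivity), ← rpow_mul (by positivity), hexp,
          mul_rpow (by positivity) hlogN, mul_rpow (by positivity) hlogN]
        ring

theorem stmt14 (g h : ℕ) (hh : 2 ≤ h) (hgh : h ≤ g) :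
    ∃ C : ℝ, 0 < C ∧ ∀ A : Set ℕ, IsChSet h g ((fun a : ℕ => (a : ℤ)) '' A) →
      ∀ N : ℕ, 2 ≤ N →
        ∑ ν ∈ Finset.Icc 1 N,
            ((A ∩ Set.Ioc ((ν - 1) * N) (ν * N)).ncard : ℝ) * (ν : ℝ) ^ (-(1 - (1 : ℝ) / h))
          ≤ C * ((N : ℝ) * Real.log N) ^ (1 - (1 : ℝ) / h) :=
  stmt14_general g h hh
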